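/- Let Y : ℝ → ℝ be continuous with Y ≥ 0, Y(0) = 0, and Y(t) → +∞ as t → +∞ and as t → −∞. For s,t ∈ ℝ, let m_Y(s,t) := inf{ Y(r) : r ∈ s̄t }, where s̄t := [min(s,t), max(s,t)] if s·t ≥ 0, and s̄t := (−∞, min(s,t)] ∪ [max(s,t), +∞) if s·t < 0, and set d_Y(s,t) := Y(s) + Y(t) − 2·m_Y(s,t). Then d_Y is a pseudometric on ℝ: for all s,t,u ∈ ℝ, d_Y(s,t) ≥ 0, d_Y(s,s) = 0, d_Y(s,t) = d_Y(t,s), and d_Y(s,u) ≤ d_Y(s,t) + d_Y(t,u). -/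
import Mathlib


open Classical in
/-- The "interval" `s̄t` in the cyclic-at-infinity sense: `[min(s,t), max(s,t)]` if `s·t ≥ 0`,
and `(-∞, min(s,t)] ∪ [max(s,t), ∞)` if `s·t < 0`. -/
noncomputable def sbar (s t : ℝ) : Set ℝ :=
  if 0 ≤ s * t then Set.Icc (min s t) (max s t)
  else Set.Iic (min s t) ∪ Set.Ici (max s t)

/-- `m_Y(s,t) = inf { Y r : r ∈ s̄t }`. -/
noncomputable def mY (Y : ℝ → ℝ) (s t : ℝ) : ℝ :=
  sInf (Y '' sbar s t)

/-- `d_Y(s,t) = Y s + Y t - 2 m_Y(s,t)`. -/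
noncomputable def dY (Y : ℝ → ℝ) (s t : ℝ) : ℝ :=
  Y s + Y t - 2 * mY Y s t

lemma left_mem_sbar (s t : ℝ) : s ∈ sbar s t := by
  unfold sbar
  split_ifs with h
  · exact ⟨min_le_left s t, le_max_left s t⟩
  · rcases le_total s t with h' | h'
    · left; simp [Set.mem_Iic, le_min_iff, h']
    · right; simp [Set.mem_Ici, max_le_iff, h']

lemma sbar_comm (s t : ℝ) : sbar s t = sbar t s := by
  unfold sbar; rw [mul_comm, min_comm, max_comm]

lemma right_mem_sbar (s t : ℝ) : t ∈ sbar s t := by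
  rw [sbar_comm]; exact left_mem_sbar t s

lemma bddBelow_im (Y : ℝ → ℝ) (hnonneg : ∀ x, 0 ≤ Y x) (s t : ℝ) :
    BddBelow (Y '' sbar s t) := by
  refine ⟨0, ?_⟩
  rintro x ⟨r, -, rfl⟩
  exact hnonneg r

lemma im_nonempty (Y : ℝ → ℝ) (s t : ℝ) : (Y '' sbar s t).Nonempty :=
  ⟨Y s, s, left_mem_sbar s t, rfl⟩

lemma mY_le {Y : ℝ → ℝ} (hnonneg : ∀ x, 0 ≤ Y x) {r s t : ℝ} (h : r ∈ sbar s t) :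
    mY Y s t ≤ Y r :=
  csInf_le (bddBelow_im Y hnonneg s t) ⟨r, h, rfl⟩

lemma mY_nonneg {Y : ℝ → ℝ} (hnonneg : ∀ x, 0 ≤ Y x) (s t : ℝ) : 0 ≤ mY Y s t := by
  apply le_csInf (im_nonempty Y s t)
  rintro b ⟨r, -, rfl⟩
  exact hnonneg r

lemma mY_comm (Y : ℝ → ℝ) (s t : ℝ) : mY Y s t = mY Y t s := by
  unfold mY; rw [sbar_comm]

lemma Icc3 {a b c x : ℝ} (h1 : min a c ≤ x) (h2 : x ≤ max a c) :
    (min a b ≤ x ∧ x ≤ max a b) ∨ (min b c ≤ x ∧ x ≤ max b c) := by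
  simp only [min_le_iff, le_max_iff] at *
  rcases le_total x b with h | h <;> tauto

lemma sbar_subset {s t u : ℝ} (hs : s ≠ 0) (ht : t ≠ 0) (hu : u ≠ 0) :
    sbar s u ⊆ sbar s t ∪ sbar t u := by
  intro r hr
  unfold sbar at hr ⊢
  rcases hs.lt_or_gt with hs | hs <;> rcases ht.lt_or_gt with ht | ht <;>
    rcases hu.lt_or_gt with hu | hu
  · -- s<0, t<0, u<0
    rw [if_pos (le_of_lt (mul_pos_of_neg_of_neg hs hu))] at hr
    rw [if_pos (le_of_lt (mul_pos_of_neg_of_neg hs ht)),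
        if_pos (le_of_lt (mul_pos_of_neg_of_neg ht hu))]
    exact Icc3 hr.1 hr.2
  · -- s<0, t<0, u>0
    rw [if_neg (not_le.mpr (mul_neg_of_neg_of_pos hs hu))] at hr
    rw [if_pos (le_of_lt (mul_pos_of_neg_of_neg hs ht)),
        if_neg (not_le.mpr (mul_neg_of_neg_of_pos ht hu))]
    simp only [Set.mem_union, Set.mem_Icc, Set.mem_Iic, Set.mem_Ici, le_min_iff,
      min_le_iff, le_max_iff, max_le_iff] at hr ⊢
    rcases hr with ⟨h1, h2⟩ | ⟨h1, h2⟩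
    · rcases le_total r t with h | h
      · right; left; exact ⟨h, by linarith⟩
      · left; exact ⟨Or.inr h, Or.inl (by linarith)⟩
    · right; right; exact ⟨by linarith, h2⟩
  · -- s<0, t>0, u<0
    rw [if_pos (le_of_lt (mul_pos_of_neg_of_neg hs hu))] at hr
    rw [if_neg (not_le.mpr (mul_neg_of_neg_of_pos hs ht)),
        if_neg (not_le.mpr (mul_neg_of_pos_of_neg ht hu))]
    simp only [Set.mem_union, Set.mem_Icc, Set.mem_Iic, Set.mem_Ici, le_min_iff,
      min_le_iff, le_max_iff, max_le_iff] at hr ⊢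
    rcases hr with ⟨h1, h2⟩
    rcases h2 with h2 | h2
    · left; left; exact ⟨by linarith, by linarith⟩
    · right; left; exact ⟨by linarith, by linarith⟩
  · -- s<0, t>0, u>0
    rw [if_neg (not_le.mpr (mul_neg_of_neg_of_pos hs hu))] at hr
    rw [if_neg (not_le.mpr (mul_neg_of_neg_of_pos hs ht)),
        if_pos (le_of_lt (mul_pos ht hu))]
    simp only [Set.mem_union, Set.mem_Icc, Set.mem_Iic, Set.mem_Ici, le_min_iff,
      min_le_iff, le_max_iff, max_le_iff] at hr ⊢
    rcases hr with ⟨h1, h2⟩ | ⟨h1, h2⟩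
    · left; left; exact ⟨h1, by linarith⟩
    · rcases le_total r t with h | h
      · right; exact ⟨Or.inr h2, Or.inl h⟩
      · left; right; exact ⟨by linarith, h⟩
  · -- s>0, t<0, u<0
    rw [if_neg (not_le.mpr (mul_neg_of_pos_of_neg hs hu))] at hr
    rw [if_neg (not_le.mpr (mul_neg_of_pos_of_neg hs ht)),
        if_pos (le_of_lt (mul_pos_of_neg_of_neg ht hu))]
    simp only [Set.mem_union, Set.mem_Icc, Set.mem_Iic, Set.mem_Ici, le_min_iff,
      min_le_iff, le_max_iff, max_le_iff] at hr ⊢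
    rcases hr with ⟨h1, h2⟩ | ⟨h1, h2⟩
    · rcases le_total r t with h | h
      · left; left; exact ⟨by linarith, h⟩
      · right; exact ⟨Or.inl h, Or.inr h2⟩
    · left; right; exact ⟨h1, by linarith⟩
  · -- s>0, t<0, u>0
    rw [if_pos (le_of_lt (mul_pos hs hu))] at hr
    rw [if_neg (not_le.mpr (mul_neg_of_pos_of_neg hs ht)),
        if_neg (not_le.mpr (mul_neg_of_neg_of_pos ht hu))]
    simp only [Set.mem_union, Set.mem_Icc, Set.mem_Iic, Set.mem_Ici, le_min_iff,
      min_le_iff, le_max_iff, max_le_iff] at hr ⊢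
    rcases hr with ⟨h1, h2⟩
    rcases h1 with h1 | h1
    · left; right; exact ⟨by linarith, by linarith⟩
    · right; right; exact ⟨by linarith, by linarith⟩
  · -- s>0, t>0, u<0
    rw [if_neg (not_le.mpr (mul_neg_of_pos_of_neg hs hu))] at hr
    rw [if_pos (le_of_lt (mul_pos hs ht)),
        if_neg (not_le.mpr (mul_neg_of_pos_of_neg ht hu))]
    simp only [Set.mem_union, Set.mem_Icc, Set.mem_Iic, Set.mem_Ici, le_min_iff,
      min_le_iff, le_max_iff, max_le_iff] at hr ⊢
    rcases hr with ⟨h1, h2⟩ | ⟨h1, h2⟩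
    · right; left; exact ⟨by linarith, h2⟩
    · rcases le_total r t with h | h
      · left; exact ⟨Or.inl h1, Or.inr h⟩
      · right; right; exact ⟨h, by linarith⟩
  · -- s>0, t>0, u>0
    rw [if_pos (le_of_lt (mul_pos hs hu))] at hr
    rw [if_pos (le_of_lt (mul_pos hs ht)), if_pos (le_of_lt (mul_pos ht hu))]
    exact Icc3 hr.1 hr.2

lemma min_le_mY {Y : ℝ → ℝ} (hnonneg : ∀ x, 0 ≤ Y x) (h0 : Y 0 = 0) (s t u : ℝ) :
    min (mY Y s t) (mY Y t u) ≤ mY Y s u := by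
  by_cases hs : s = 0
  · subst hs
    have h1 : mY Y 0 t ≤ Y 0 := mY_le hnonneg (left_mem_sbar 0 t)
    calc min (mY Y 0 t) (mY Y t u) ≤ mY Y 0 t := min_le_left _ _
      _ ≤ 0 := by rw [h0] at h1; exact h1
      _ ≤ mY Y 0 u := mY_nonneg hnonneg 0 u
  by_cases ht : t = 0
  · subst ht
    have h1 : mY Y s 0 ≤ Y 0 := mY_le hnonneg (right_mem_sbar s 0)
    calc min (mY Y s 0) (mY Y 0 u) ≤ mY Y s 0 := min_le_left _ _
      _ ≤ 0 := by rw [h0] at h1; exact h1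
      _ ≤ mY Y s u := mY_nonneg hnonneg s u
  by_cases hu : u = 0
  · subst hu
    have h1 : mY Y t 0 ≤ Y 0 := mY_le hnonneg (right_mem_sbar t 0)
    calc min (mY Y s t) (mY Y t 0) ≤ mY Y t 0 := min_le_right _ _
      _ ≤ 0 := by rw [h0] at h1; exact h1
      _ ≤ mY Y s 0 := mY_nonneg hnonneg s 0
  · apply le_csInf (im_nonempty Y s u)
    rintro b ⟨r, hr, rfl⟩
    rcases sbar_subset hs ht hu hr with h | h
    · exact le_trans (min_le_left _ _) (mY_le hnonneg h)
    · exact le_trans (min_le_right _ _) (mY_le hnonneg h)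

theorem dY_pseudometric
    (Y : ℝ → ℝ) (hcont : Continuous Y) (hnonneg : ∀ x, 0 ≤ Y x) (h0 : Y 0 = 0)
    (htop : Filter.Tendsto Y Filter.atTop Filter.atTop)
    (hbot : Filter.Tendsto Y Filter.atBot Filter.atTop) :
    ∀ s t u : ℝ,
      0 ≤ dY Y s t ∧ dY Y s s = 0 ∧ dY Y s t = dY Y t s ∧
        dY Y s u ≤ dY Y s t + dY Y t u := by
  intro s t u
  refine ⟨?_, ?_, ?_, ?_⟩
  · have h1 : mY Y s t ≤ Y s := mY_le hnonneg (left_mem_sbar s t)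
    have h2 : mY Y s t ≤ Y t := mY_le hnonneg (right_mem_sbar s t)
    unfold dY; linarith
  · have : mY Y s s = Y s := by
      unfold mY
      rw [show sbar s s = {s} by
        unfold sbar
        rw [if_pos (mul_self_nonneg s), min_self, max_self, Set.Icc_self]]
      rw [Set.image_singleton, csInf_singleton]
    unfold dY; rw [this]; ring
  · unfold dY; rw [mY_comm Y s t]; ring
  · have hmin : min (mY Y s t) (mY Y t u) ≤ mY Y s u := min_le_mY hnonneg h0 s t u
    have h1 : mY Y s t ≤ Y t := mY_le hnonneg (right_mem_sbar s t)
    have h2 : mY Y t u ≤ Y t := mY_le hnonneg (left_mem_sbar t u)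
    rcases min_le_iff.mp hmin with h | h <;> unfold dY <;> linarith
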